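/- arXiv:1208.2164 — 2 statements merged into one kernel-verified Lean document; each statement's English description precedes it below -/
import Mathlib

section
/- For integers a ≥ 2 and 1 ≤ k < a/2, the bipartite tournament T(a,k) defined as follows is strongly connected but contains no hamiltonian cycle: colour classes X = R ∪ S and Y = U ∪ W with |R| = |U| = k, |S| = |W| = a − k, and arcs: ru for all r ∈ R, u ∈ U; us for all u ∈ U, s ∈ S; sw for all s ∈ S, w ∈ W; and wr for all w ∈ W, r ∈ R. -/
namespace BipDigraph

variable {V : Type}

/-- Out-degree of `v` in the digraph `(V, A)`. -/
noncomputable def outdeg (A : V → V → Prop) (v : V) : ℕ := Nat.card {w : V // A v w}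

/-- In-degree of `v` in the digraph `(V, A)`. -/
noncomputable def indeg (A : V → V → Prop) (v : V) : ℕ := Nat.card {w : V // A w v}

/-- Degree of `v`: out-degree plus in-degree. -/
noncomputable def deg (A : V → V → Prop) (v : V) : ℕ := outdeg A v + indeg A v

/-- Out-degree of `v` relative to the vertex set `S`. -/
noncomputable def outdegIn (A : V → V → Prop) (S : Set V) (v : V) : ℕ := Nat.card {w : V // w ∈ S ∧ A v w}

/-- In-degree of `v` relative to the vertex set `S`. -/
noncomputable def indegIn (A : V → V → Prop) (S : Set V) (v : V) : ℕ := Nat.card {w : V // w ∈ S ∧ A w v}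

/-- Degree of `v` relative to the vertex set `S`. -/
noncomputable def degIn (A : V → V → Prop) (S : Set V) (v : V) : ℕ := outdegIn A S v + indegIn A S v

/-- The arc `(u,v)` belongs to the matching given by the function `M` on the class `X`. -/
def InM (X : Finset V) (M : V → V) (u v : V) : Prop := u ∈ X ∧ M u = v

/-- The arc `(u,v)` is an arc of the digraph not belonging to the matching. -/
def NotM (A : V → V → Prop) (X : Finset V) (M : V → V) (u v : V) : Prop :=
  A u v ∧ ¬ InM X M u v

/-- `M` is a complete matching from `X` to `Y`: every `x ∈ X` is matched along an arc
to a vertex of `Y`, and the matching arcs are independent. -/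
def CompleteMatching (A : V → V → Prop) (X Y : Finset V) (M : V → V) : Prop :=
  (∀ x ∈ X, M x ∈ Y ∧ A x (M x)) ∧ Set.InjOn M X

/-- Consecutive arcs of the list alternately satisfy `P` and `Q`, starting with `P`. -/
def Alt (P Q : V → V → Prop) : List V → Prop
  | [] => True
  | [_] => True
  | a :: b :: t => P a b ∧ Alt Q P (b :: t)

/-- `p` is an oriented path in `(V, A)` whose arcs are alternately in the matching `M`
(on `X`) and outside of it. -/
def IsCompatPath (A : V → V → Prop) (X : Finset V) (M : V → V) (p : List V) : Prop :=
  p ≠ [] ∧ p.Nodup ∧ p.Chain' A ∧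
    (Alt (InM X M) (NotM A X M) p ∨ Alt (NotM A X M) (InM X M) p)

/-- An `M`-compatible oriented path from `u` to `v`. -/
def IsCompatPathFromTo (A : V → V → Prop) (X : Finset V) (M : V → V)
    (p : List V) (u v : V) : Prop :=
  IsCompatPath A X M p ∧ p.head? = some u ∧ p.getLast? = some v

/-- `p` lists the vertices of an oriented cycle of `(V, A)` in cyclic order;
its length (number of arcs = number of vertices) is `p.length`. -/
def IsCycle (A : V → V → Prop) (p : List V) : Prop :=
  2 ≤ p.length ∧ p.Nodup ∧ ∃ u, p.head? = some u ∧ List.Chain' A (p ++ [u])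

/-- `p` is an oriented cycle whose arcs are alternately in the matching `M` (on `X`)
and outside of it. -/
def IsCompatCycle (A : V → V → Prop) (X : Finset V) (M : V → V) (p : List V) : Prop :=
  2 ≤ p.length ∧ p.Nodup ∧ ∃ u, p.head? = some u ∧ List.Chain' A (p ++ [u]) ∧
    (Alt (InM X M) (NotM A X M) (p ++ [u]) ∨ Alt (NotM A X M) (InM X M) (p ++ [u]))

/-- The digraph `(V, A)` contains an oriented cycle of length `n`. -/
def HasCycleOfLength (A : V → V → Prop) (n : ℕ) : Prop :=
  ∃ p : List V, IsCycle A p ∧ p.length = n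

/-- `(V, A)` is a balanced bipartite digraph with colour classes `X`, `Y` of cardinality `a`. -/
def BalancedBipartite (A : V → V → Prop) (X Y : Finset V) (a : ℕ) : Prop :=
  X.card = a ∧ Y.card = a ∧ Disjoint X Y ∧ (∀ v : V, v ∈ X ∨ v ∈ Y) ∧
    ∀ u v : V, A u v → (u ∈ X ∧ v ∈ Y) ∨ (u ∈ Y ∧ v ∈ X)

/-- Condition (M): `d(u) + d(v) ≥ 3a + 1` for every pair of distinct vertices `u, v`
with no arc between them in either direction. -/
def CondM (A : V → V → Prop) (a : ℕ) : Prop :=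
  ∀ u v : V, u ≠ v → ¬ A u v → ¬ A v u → 3 * a + 1 ≤ deg A u + deg A v

/-- Condition (A): `d(x') + d(y') + d(x'') + d(y'') ≥ 6a + 2` for all pairwise distinct
`x', x'' ∈ X`, `y', y'' ∈ Y` joined by `M`-compatible paths from `x'` to `y'` and from
`x''` to `y''`. -/
def CondA (A : V → V → Prop) (X Y : Finset V) (M : V → V) (a : ℕ) : Prop :=
  ∀ x' x'' y' y'' : V, x' ∈ X → x'' ∈ X → y' ∈ Y → y'' ∈ Y → x' ≠ x'' → y' ≠ y'' →
    (∃ p, IsCompatPathFromTo A X M p x' y') → (∃ p, IsCompatPathFromTo A X M p x'' y'') →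
    6 * a + 2 ≤ deg A x' + deg A y' + deg A x'' + deg A y''

/-- An `M`-compatible cycle all of whose vertices lie in `S`. -/
def IsCompatCycleIn (A : V → V → Prop) (X : Finset V) (M : V → V) (S : Set V)
    (p : List V) : Prop :=
  IsCompatCycle A X M p ∧ ∀ v ∈ p, v ∈ S

/-- An `M`-compatible path from `u` to `v` all of whose vertices lie in `S`. -/
def IsCompatPathFromToIn (A : V → V → Prop) (X : Finset V) (M : V → V) (S : Set V)
    (p : List V) (u v : V) : Prop :=
  IsCompatPathFromTo A X M p u v ∧ ∀ w ∈ p, w ∈ S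

/-- The digraph `(V, A)` is strongly connected. -/
def StronglyConnected (A : V → V → Prop) : Prop :=
  ∀ u v : V, u ≠ v →
    ∃ p : List V, p.Chain' A ∧ p.head? = some u ∧ p.getLast? = some v

/-!
Around `R → U → S → W → R` every vertex of one part dominates every vertex of the next, and
all four parts are nonempty, so each vertex reaches every part: `T(a,k)` is strongly connected.
Every arc leaving `W` enters `R`, so along a hamiltonian cycle the successor map injects `W`
into `R`; this is impossible since `|W| = a - k > k = |R|`.
-/

theorem stronglyConnected_of_reflTransGen {A : V → V → Prop}
    (h : ∀ u v, Relation.ReflTransGen A u v) : StronglyConnected A := by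
  intro u v _
  obtain ⟨l, hl, hlast⟩ := List.exists_isChain_cons_of_relationReflTransGen (h u v)
  exact ⟨u :: l, hl, rfl, by rw [List.getLast?_eq_some_getLast (List.cons_ne_nil _ _), hlast]⟩

theorem reflTransGen_of_cyclic_cover {n : ℕ} [NeZero n] {A : V → V → Prop}
    (P : ZMod n → Set V) (hne : ∀ i, (P i).Nonempty) (hcover : ∀ v, ∃ i, v ∈ P i)
    (harc : ∀ i, ∀ x ∈ P i, ∀ y ∈ P (i + 1), A x y) (u v : V) :
    Relation.ReflTransGen A u v := by
  obtain ⟨i, hu⟩ := hcover u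
  have reach : ∀ j : ℕ, ∀ y ∈ P (i + j + 1), Relation.TransGen A u y := by
    intro j
    induction j with
    | zero => exact fun y hy => .single (harc i u hu y (by simpa using hy))
    | succ j ih =>
      intro y hy
      obtain ⟨x, hx⟩ := hne (i + j + 1)
      exact .tail (ih x hx) (harc _ x hx y (by simpa [add_assoc] using hy))
  obtain ⟨i', hv⟩ := hcover v
  refine (reach (i' - i - 1).val v ?_).to_reflTransGen
  rwa [ZMod.natCast_zmod_val, show i + (i' - i - 1) + 1 = i' by ring]

theorem countP_dropLast_le_countP_tail {A : V → V → Prop} {P Q : V → Prop}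
    [DecidablePred P] [DecidablePred Q] (hPQ : ∀ x y, A x y → P x → Q y) :
    ∀ {l : List V}, l.IsChain A → l.dropLast.countP (P ·) ≤ l.tail.countP (Q ·)
  | [], _ => by simp
  | [_], _ => by simp
  | x :: y :: t, h => by
    rw [List.isChain_cons_cons] at h
    have ih := countP_dropLast_le_countP_tail hPQ h.2
    rw [List.tail_cons] at ih
    rw [List.dropLast_cons_cons, List.tail_cons, List.countP_cons, List.countP_cons]
    by_cases hx : P x
    · simp only [hx, hPQ x y h.1 hx, decide_true, if_true]
      omega
    · simp only [hx, decide_false, Bool.false_eq_true, if_false]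
      omega

theorem IsCycle.countP_le {A : V → V → Prop} {P Q : V → Prop} [DecidablePred P]
    [DecidablePred Q] {p : List V} (hp : IsCycle A p) (hPQ : ∀ x y, A x y → P x → Q y) :
    p.countP (P ·) ≤ p.countP (Q ·) := by
  obtain ⟨-, -, u, hu, hchain⟩ := hp
  obtain ⟨t, rfl⟩ : ∃ t, p = u :: t := List.head?_eq_some_iff.mp hu
  -- Dropping the last vertex of the closed walk `p ++ [u]` gives `p`, dropping the first
  -- gives a rotation of `p`.
  have h := countP_dropLast_le_countP_tail hPQ hchain
  rwa [List.dropLast_concat, List.cons_append, List.tail_cons,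
    (List.perm_append_singleton u t).countP_eq] at h

theorem _root_.List.Nodup.countP_mem_eq_card [DecidableEq V] {p : List V} (hp : p.Nodup)
    (s : Finset V) : p.countP (· ∈ s) = (s.filter (· ∈ p)).card := by
  rw [List.countP_eq_length_filter, ← List.toFinset_card_of_nodup (hp.filter _)]
  congr 1
  ext x
  simp [and_comm]

theorem IsCycle.card_le_card [DecidableEq V] {A : V → V → Prop} {p : List V}
    (hp : IsCycle A p) {s t : Finset V} (hs : ∀ x ∈ s, x ∈ p)
    (hst : ∀ x y, A x y → x ∈ s → y ∈ t) : s.card ≤ t.card := by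
  have hnodup : p.Nodup := hp.2.1
  calc s.card = (s.filter (· ∈ p)).card := by rw [Finset.filter_true_of_mem hs]
    _ = p.countP (· ∈ s) := (hnodup.countP_mem_eq_card s).symm
    _ ≤ p.countP (· ∈ t) := hp.countP_le hst
    _ = (t.filter (· ∈ p)).card := hnodup.countP_mem_eq_card t
    _ ≤ t.card := Finset.card_filter_le _ _

theorem _root_.List.Nodup.mem_of_card_le_length [Fintype V] {p : List V} (hp : p.Nodup)
    (h : Fintype.card V ≤ p.length) (v : V) : v ∈ p := by
  classical
  have hfin : p.toFinset = Finset.univ := Finset.eq_univ_of_card _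
    (le_antisymm (Finset.card_le_univ _) (by rwa [List.toFinset_card_of_nodup hp]))
  exact List.mem_toFinset.mp (hfin ▸ Finset.mem_univ v)

theorem stmt12_general (a k : ℕ) (hk1 : 1 ≤ k) (hk2 : 2 * k < a)
    {V : Type} [Fintype V] [DecidableEq V]
    (R S U W : Finset V)
    (hR : R.card = k) (hS : S.card = a - k) (hU : U.card = k) (hW : W.card = a - k)
    (hUW : Disjoint U W) (hXY : Disjoint (R ∪ S) (U ∪ W))
    (hcover : ∀ v : V, v ∈ R ∪ S ∪ U ∪ W)
    (A : V → V → Prop)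
    (hA : ∀ u v : V, A u v ↔
      (u ∈ R ∧ v ∈ U) ∨ (u ∈ U ∧ v ∈ S) ∨ (u ∈ S ∧ v ∈ W) ∨ (u ∈ W ∧ v ∈ R)) :
    StronglyConnected A ∧ ¬ HasCycleOfLength A (2 * a) := by
  constructor
  · refine stronglyConnected_of_reflTransGen
      (reflTransGen_of_cyclic_cover (n := 4) ![↑R, ↑U, ↑S, ↑W] ?_ ?_ ?_)
    · intro i
      fin_cases i <;> refine Finset.coe_nonempty.mpr (Finset.card_pos.mp ?_) <;> omega
    · intro v
      have := hcover v
      simp only [Finset.mem_union] at this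
      rcases this with ((h | h) | h) | h
      exacts [⟨0, h⟩, ⟨2, h⟩, ⟨1, h⟩, ⟨3, h⟩]
    · intro i
      fin_cases i
      exacts [fun x hx y hy => (hA x y).2 (.inl ⟨hx, hy⟩),
        fun x hx y hy => (hA x y).2 (.inr (.inl ⟨hx, hy⟩)),
        fun x hx y hy => (hA x y).2 (.inr (.inr (.inl ⟨hx, hy⟩))),
        fun x hx y hy => (hA x y).2 (.inr (.inr (.inr ⟨hx, hy⟩)))]
  · rintro ⟨p, hp, hlen⟩
    have hcard : Fintype.card V ≤ 2 * a := calc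
      Fintype.card V = (R ∪ S ∪ U ∪ W).card := by
        rw [Finset.eq_univ_of_forall hcover, Finset.card_univ]
      _ ≤ R.card + S.card + U.card + W.card := by
        grw [Finset.card_union_le, Finset.card_union_le, Finset.card_union_le]
      _ = 2 * a := by omega
    have hWR : ∀ x y, A x y → x ∈ W → y ∈ R := by
      intro x y hxy hx
      obtain ⟨hxR, -⟩ | ⟨hxU, -⟩ | ⟨hxS, -⟩ | ⟨-, hy⟩ := (hA x y).1 hxy
      · exact (Finset.disjoint_left.mp hXY (Finset.mem_union_left S hxR)
          (Finset.mem_union_right U hx)).elim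
      · exact (Finset.disjoint_left.mp hUW hxU hx).elim
      · exact (Finset.disjoint_left.mp hXY (Finset.mem_union_right R hxS)
          (Finset.mem_union_right U hx)).elim
      · exact hy
    have hp_nodup : p.Nodup := hp.2.1
    have hWR_card := hp.card_le_card (fun x _ => hp_nodup.mem_of_card_le_length (by omega) x) hWR
    omega

/-- for `a ≥ 2` and `1 ≤ k < a/2`, the bipartite tournament `T(a,k)` with
classes `X = R ∪ S`, `Y = U ∪ W` (`|R| = |U| = k`, `|S| = |W| = a - k`) and arcs `ru`,
`us`, `sw`, `wr` is strongly connected but contains no hamiltonian cycle. -/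
theorem stmt12 (a k : ℕ) (ha : 2 ≤ a) (hk1 : 1 ≤ k) (hk2 : 2 * k < a)
    {V : Type} [Fintype V] [DecidableEq V]
    (R S U W : Finset V)
    (hR : R.card = k) (hS : S.card = a - k) (hU : U.card = k) (hW : W.card = a - k)
    (hRS : Disjoint R S) (hUW : Disjoint U W) (hXY : Disjoint (R ∪ S) (U ∪ W))
    (hcover : ∀ v : V, v ∈ R ∪ S ∪ U ∪ W)
    (A : V → V → Prop)
    (hA : ∀ u v : V, A u v ↔
      (u ∈ R ∧ v ∈ U) ∨ (u ∈ U ∧ v ∈ S) ∨ (u ∈ S ∧ v ∈ W) ∨ (u ∈ W ∧ v ∈ R)) :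
    StronglyConnected A ∧ ¬ HasCycleOfLength A (2 * a) :=
  stmt12_general a k hk1 hk2 R S U W hR hS hU hW hUW hXY hcover A hA

end BipDigraph
end

section
/- Let D be a balanced bipartite digraph with colour classes X, Y of cardinality a ≥ 2 satisfying condition (M), and suppose D contains a complete matching M from X to Y and no cycle of length 2a. Fix distinct y' ∈ Y and x'' ∈ X, and let S be the set of vertices in Y \ {y'} reachable from y' along an M-compatible path of positive length. If D contains no M-compatible path from y' to x'', then (a−1)/2 ≤ |S| ≤ (a−2)/2, a contradiction; in particular such S cannot exist, i.e., D always contains an M-compatible path from y' to x''. -/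
namespace List

variable {α : Type*}

lemma isChain_interleave {R : α → α → Prop} : ∀ {l₁ l₂ : List α}, l₁.length = l₂.length →
    (∀ b ∈ l₁, ∀ c ∈ l₂, R b c ∧ R c b) → (l₁.interleave l₂).IsChain R
  | [], [], _, _ => by simp
  | b :: l₁, c :: l₂, hlen, h => by
    rw [cons_interleave, cons_interleave]
    refine .cons_cons (h b (by simp) c (by simp)).1 (isChain_cons.2 ⟨?_, ?_⟩)
    · rcases l₁ with _ | ⟨b', l₁⟩
      · simp_all
      · simpa using (h b' (by simp) c (by simp)).2
    · exact isChain_interleave (by simpa using hlen)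
        fun b hb c hc => h b (mem_cons_of_mem _ hb) c (mem_cons_of_mem _ hc)
  | [], _ :: _, hlen, _ | _ :: _, [], hlen, _ => by simp at hlen

lemma getLast?_interleave : ∀ {l₁ l₂ : List α}, l₁.length = l₂.length →
    (l₁.interleave l₂).getLast? = l₂.getLast?
  | [], [], _ => by simp
  | a :: l₁, b :: l₂, hlen => by
    have ih := getLast?_interleave (l₁ := l₁) (l₂ := l₂) (by simpa using hlen)
    simp_all [getLast?_cons]
  | [], _ :: _, hlen | _ :: _, [], hlen => by simp at hlen

lemma exists_nodup_isChain_cons_of_reflTransGen {r : α → α → Prop} {a b : α}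
    (h : Relation.ReflTransGen r a b) :
    ∃ l, (a :: l).Nodup ∧ (a :: l).IsChain r ∧ (a :: l).getLast? = some b := by
  induction h using Relation.ReflTransGen.head_induction_on with
  | refl => exact ⟨[], nodup_singleton _, isChain_singleton _, rfl⟩
  | @head a c hac _ ih =>
    obtain ⟨l, hnd, hch, hlast⟩ := ih
    by_cases ha : a ∈ c :: l
    · obtain ⟨l₁, l₂, hsplit⟩ := append_of_mem ha
      rw [hsplit] at hnd hch hlast
      refine ⟨l₂, hnd.sublist (sublist_append_right _ _), hch.suffix (suffix_append _ _), ?_⟩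
      rwa [getLast?_append_of_ne_nil _ (cons_ne_nil _ _)] at hlast
    · exact ⟨c :: l, nodup_cons.2 ⟨ha, hnd⟩, hch.cons_cons hac, by rwa [getLast?_cons_cons]⟩

end List

namespace BipDigraph

variable {V : Type}

section Degree

variable {A : V → V → Prop} {v : V} {T : Finset V}

lemma outdeg_eq_ncard : outdeg A v = {w | A v w}.ncard := Nat.card_coe_set_eq _

lemma outdeg_le_card (h : ∀ w, A v w → w ∈ T) : outdeg A v ≤ T.card := by
  rw [outdeg_eq_ncard, ← Set.ncard_coe_finset]
  exact Set.ncard_le_ncard h T.finite_toSet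

lemma indeg_le_card (h : ∀ w, A w v → w ∈ T) : indeg A v ≤ T.card :=
  outdeg_le_card (A := flip A) h

lemma forall_adj_of_card_le_outdeg (h : ∀ w, A v w → w ∈ T) (hT : T.card ≤ outdeg A v) :
    ∀ w ∈ T, A v w := by
  rw [outdeg_eq_ncard, ← Set.ncard_coe_finset] at hT
  rw [Set.eq_of_subset_of_ncard_le h hT T.finite_toSet]
  exact fun _ hw => hw

lemma forall_adj_of_card_le_indeg (h : ∀ w, A w v → w ∈ T) (hT : T.card ≤ indeg A v) :
    ∀ w ∈ T, A w v :=
  forall_adj_of_card_le_outdeg (A := flip A) h hT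

lemma exists_adj_of_outdeg_pos (h : 0 < outdeg A v) : ∃ w, A v w :=
  let ⟨⟨w, hw⟩⟩ := (Nat.card_pos_iff.1 h).1
  ⟨w, hw⟩

lemma exists_adj_of_indeg_pos (h : 0 < indeg A v) : ∃ w, A w v :=
  exists_adj_of_outdeg_pos (A := flip A) h

end Degree

lemma isCycle_cons_cons_interleave {A : V → V → Prop} {w₁ w₂ : V} {bs cs : List V}
    (hlen : bs.length = cs.length) (hbs : bs ≠ []) (hnd : (w₁ :: w₂ :: (bs ++ cs)).Nodup)
    (h₁₂ : A w₁ w₂) (h₂ : ∀ b ∈ bs.head?, A w₂ b)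
    (hbc : ∀ b ∈ bs, ∀ c ∈ cs, A b c ∧ A c b) (h₁ : ∀ c ∈ cs.getLast?, A c w₁) :
    IsCycle A (w₁ :: w₂ :: bs.interleave cs) := by
  have hperm : (w₁ :: w₂ :: bs.interleave cs).Perm (w₁ :: w₂ :: (bs ++ cs)) :=
    (List.interleave_perm_append.cons _).cons _
  refine ⟨by simp, hperm.nodup_iff.2 hnd, w₁, rfl, ?_⟩
  show List.IsChain A _
  rw [List.cons_append, List.cons_append, List.isChain_cons_cons, List.isChain_cons,
    List.isChain_append]
  refine ⟨h₁₂, ?_, List.isChain_interleave hlen hbc, List.isChain_singleton _, ?_⟩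
  · obtain ⟨b, bs, rfl⟩ := List.exists_cons_of_ne_nil hbs
    simpa using h₂ b rfl
  · rw [List.getLast?_interleave hlen]
    simpa using h₁

namespace BalancedBipartite

variable {A : V → V → Prop} {X Y : Finset V} {a : ℕ} {u v x y : V}

protected lemma symm (hbb : BalancedBipartite A X Y a) : BalancedBipartite A Y X a :=
  ⟨hbb.2.1, hbb.1, hbb.2.2.1.symm, fun v => (hbb.2.2.2.1 v).symm,
    fun u v huv => (hbb.2.2.2.2 u v huv).symm⟩

lemma notMem_right (hbb : BalancedBipartite A X Y a) (hx : x ∈ X) : x ∉ Y :=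
  Finset.disjoint_left.1 hbb.2.2.1 hx

lemma mem_right_of_adj (hbb : BalancedBipartite A X Y a) (hx : x ∈ X) (h : A x v) : v ∈ Y :=
  (hbb.2.2.2.2 x v h).elim And.right fun h' => absurd h'.1 (hbb.notMem_right hx)

lemma mem_right_of_adj' (hbb : BalancedBipartite A X Y a) (hx : x ∈ X) (h : A v x) : v ∈ Y :=
  (hbb.2.2.2.2 v x h).elim (fun h' => absurd h'.2 (hbb.notMem_right hx)) And.left

lemma not_adj (hbb : BalancedBipartite A X Y a) (hu : u ∈ X) (hv : v ∈ X) : ¬ A u v :=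
  fun h => hbb.notMem_right hv (hbb.mem_right_of_adj hu h)

lemma outdeg_le (hbb : BalancedBipartite A X Y a) (v : V) : outdeg A v ≤ a := by
  rcases hbb.2.2.2.1 v with hv | hv
  · exact hbb.2.1 ▸ outdeg_le_card fun _ => hbb.mem_right_of_adj hv
  · exact hbb.1 ▸ outdeg_le_card fun _ => hbb.symm.mem_right_of_adj hv

lemma indeg_le (hbb : BalancedBipartite A X Y a) (v : V) : indeg A v ≤ a := by
  rcases hbb.2.2.2.1 v with hv | hv
  · exact hbb.2.1 ▸ indeg_le_card fun _ => hbb.mem_right_of_adj' hv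
  · exact hbb.1 ▸ indeg_le_card fun _ => hbb.symm.mem_right_of_adj' hv

lemma deg_le (hbb : BalancedBipartite A X Y a) (v : V) : deg A v ≤ 2 * a := by
  have := hbb.outdeg_le v
  have := hbb.indeg_le v
  unfold deg
  omega

lemma forall_adj_of_two_mul_le_deg (hbb : BalancedBipartite A X Y a) (hx : x ∈ X)
    (hd : 2 * a ≤ deg A x) : ∀ y ∈ Y, A x y ∧ A y x := by
  have hout := hbb.outdeg_le x
  have hin := hbb.indeg_le x
  have hY := hbb.2.1
  unfold deg at hd
  intro y hy
  exact ⟨forall_adj_of_card_le_outdeg (fun _ => hbb.mem_right_of_adj hx) (by omega) y hy,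
    forall_adj_of_card_le_indeg (A := A) (fun _ => hbb.mem_right_of_adj' hx) (by omega) y hy⟩

lemma add_deg_ge (hbb : BalancedBipartite A X Y a) (hM : CondM A a) (hu : u ∈ X) (hv : v ∈ X)
    (huv : u ≠ v) : 3 * a + 1 ≤ deg A u + deg A v :=
  hM u v huv (hbb.not_adj hu hv) (hbb.not_adj hv hu)

lemma exists_ne (hbb : BalancedBipartite A X Y a) (ha : 2 ≤ a) (x : V) : ∃ x' ∈ X, x' ≠ x :=
  Finset.exists_mem_ne (by rw [hbb.1]; omega) x

lemma indeg_pos (hbb : BalancedBipartite A X Y a) (hM : CondM A a) (ha : 2 ≤ a) (hx : x ∈ X) :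
    0 < indeg A x := by
  obtain ⟨x', hx', hne⟩ := hbb.exists_ne ha x
  have := hbb.add_deg_ge hM hx hx' hne.symm
  have := hbb.deg_le x'
  have := hbb.outdeg_le x
  unfold deg at *
  omega

/-- The Hamiltonian cycle `y → x → y₁ → x₁ → ⋯ → y_{a-1} → x_{a-1} → y`. -/
theorem hasCycleOfLength_two_mul (hbb : BalancedBipartite A X Y a) (ha : 2 ≤ a) (hy : y ∈ Y)
    (hx : x ∈ X) (hyx : A y x) (hxY : ∀ y' ∈ Y, y' ≠ y → A x y')
    (hXy : ∀ x' ∈ X, x' ≠ x → A x' y)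
    (hcomplete : ∀ y' ∈ Y, y' ≠ y → ∀ x' ∈ X, x' ≠ x → A y' x' ∧ A x' y') :
    HasCycleOfLength A (2 * a) := by
  classical
  set bs := (Y.erase y).toList
  set cs := (X.erase x).toList
  have hbs : bs.length = a - 1 := by simp [bs, hy, hbb.2.1]
  have hcs : cs.length = a - 1 := by simp [cs, hx, hbb.1]
  have hmem_bs : ∀ b ∈ bs, b ∈ Y ∧ b ≠ y := by simp [bs, and_comm]
  have hmem_cs : ∀ c ∈ cs, c ∈ X ∧ c ≠ x := by simp [cs, and_comm]
  refine ⟨_, isCycle_cons_cons_interleave (hbs.trans hcs.symm) ?_ ?_ hyx ?_ ?_ ?_, by simp only [List.length_cons, List.length_interleave]; omega⟩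
  · exact List.ne_nil_of_length_pos (by omega)
  · have hYX : ∀ v ∈ Y, v ∉ X := fun _ => hbb.symm.notMem_right
    simp only [List.nodup_cons, List.mem_cons, List.mem_append, List.nodup_append]
    refine ⟨?_, ?_, (Y.erase y).nodup_toList, (X.erase x).nodup_toList, ?_⟩
    · rintro (h | h | h)
      exacts [hYX y hy (h ▸ hx), (hmem_bs y h).2 rfl, hYX y hy (hmem_cs y h).1]
    · rintro (h | h)
      exacts [hYX x (hmem_bs x h).1 hx, (hmem_cs x h).2 rfl]
    · rintro b hb c hc rfl
      exact hYX b (hmem_bs b hb).1 (hmem_cs b hc).1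
  · exact fun b hb => (hmem_bs b (List.mem_of_mem_head? hb)).elim (hxY b)
  · exact fun b hb c hc => (hmem_bs b hb).elim fun hbY hby => (hmem_cs c hc).elim
      (hcomplete b hbY hby c)
  · exact fun c hc => (hmem_cs c (List.mem_of_mem_getLast? hc)).elim (hXy c)

end BalancedBipartite

/-- In a bipartite digraph, a step out of `Y` is an arbitrary arc and a step out of `X` is an arc
of the matching; chains of such steps are exactly the `M`-compatible walks starting in `Y`. -/
def CompatStep (A : V → V → Prop) (X : Finset V) (M : V → V) (u v : V) : Prop :=
  A u v ∧ (u ∈ X → M u = v)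

section CompatPath

variable {A : V → V → Prop} {X Y : Finset V} {a : ℕ} {M : V → V}

lemma alt_of_isChain_compatStep (hbb : BalancedBipartite A X Y a) :
    ∀ {u : V} {l : List V}, (u :: l).IsChain (CompatStep A X M) →
      (u ∈ Y → Alt (NotM A X M) (InM X M) (u :: l)) ∧ (u ∈ X → Alt (InM X M) (NotM A X M) (u :: l))
  | _, [], _ => ⟨fun _ => trivial, fun _ => trivial⟩
  | u, v :: l, h => by
    obtain ⟨⟨huv, hMuv⟩, ht⟩ := List.isChain_cons_cons.1 h
    have ih := alt_of_isChain_compatStep hbb ht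
    refine ⟨fun hu => ⟨⟨huv, fun hX => hbb.symm.notMem_right hu hX.1⟩, ?_⟩,
      fun hu => ⟨⟨hu, hMuv hu⟩, ih.1 (hbb.mem_right_of_adj hu huv)⟩⟩
    exact ih.2 (hbb.symm.mem_right_of_adj hu huv)

theorem exists_compatPathFromTo_of_reflTransGen (hbb : BalancedBipartite A X Y a) {y v : V}
    (hy : y ∈ Y) (h : Relation.ReflTransGen (CompatStep A X M) y v) :
    ∃ p, IsCompatPathFromTo A X M p y v := by
  obtain ⟨l, hnd, hch, hlast⟩ := List.exists_nodup_isChain_cons_of_reflTransGen h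
  exact ⟨y :: l, ⟨List.cons_ne_nil _ _, hnd, hch.imp fun _ _ h => h.1,
    Or.inr ((alt_of_isChain_compatStep hbb hch).1 hy)⟩, rfl, hlast⟩

lemma compatStep_of_mem_right (hbb : BalancedBipartite A X Y a) {y v : V} (hy : y ∈ Y)
    (h : A y v) : CompatStep A X M y v :=
  ⟨h, fun hyX => absurd hyX (hbb.symm.notMem_right hy)⟩

end CompatPath

lemma CompleteMatching.exists_eq {A : V → V → Prop} {X Y : Finset V} {a : ℕ} {M : V → V}
    (hmatch : CompleteMatching A X Y M) (hbb : BalancedBipartite A X Y a) {y : V} (hy : y ∈ Y) :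
    ∃ x ∈ X, M x = y := by
  classical
  have himage : X.image M = Y := Finset.eq_of_subset_of_card_le
    (Finset.image_subset_iff.2 fun x hx => (hmatch.1 x hx).1)
    (by rw [Finset.card_image_of_injOn hmatch.2, hbb.1, hbb.2.1])
  simpa [← himage] using hy

/-- `M`-compatible walks that start in a trap `U` never leave it (an arc `y → x` is followed by the
matching arc `x → M x`) and never reach `x''`. -/
structure IsTrap (A : V → V → Prop) (Y : Finset V) (M : V → V) (x'' : V) (U : Finset V) :
    Prop where
  subset : U ⊆ Y
  matching_mem : ∀ y ∈ U, ∀ x, A y x → M x ∈ U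
  not_adj : ∀ y ∈ U, ¬ A y x''

lemma isTrap_of_forall_mem_iff {A : V → V → Prop} {X Y : Finset V} {a : ℕ} {M : V → V}
    (hbb : BalancedBipartite A X Y a) (hmatch : CompleteMatching A X Y M) {x'' : V}
    {U : Finset V} (hU : ∀ y, y ∈ U ↔ y ∈ Y ∧ ¬ Relation.ReflTransGen (CompatStep A X M) y x'') :
    IsTrap A Y M x'' U where
  subset y hy := ((hU y).1 hy).1
  matching_mem y hy x hyx := by
    obtain ⟨hyY, hyx''⟩ := (hU y).1 hy
    have hx : x ∈ X := hbb.symm.mem_right_of_adj hyY hyx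
    refine (hU _).2 ⟨(hmatch.1 x hx).1, fun h => hyx'' ?_⟩
    exact .head (compatStep_of_mem_right hbb hyY hyx) (.head ⟨(hmatch.1 x hx).2, fun _ => rfl⟩ h)
  not_adj y hy h := ((hU y).1 hy).2 (.single (compatStep_of_mem_right hbb ((hU y).1 hy).1 h))

namespace IsTrap

variable {A : V → V → Prop} {X Y U : Finset V} {a : ℕ} {M : V → V} {x'' x y : V}

lemma card_le (hU : IsTrap A Y M x'' U) (hbb : BalancedBipartite A X Y a) : U.card ≤ a :=
  hbb.2.1 ▸ Finset.card_le_card hU.subset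

lemma not_adj_of_matching_notMem (hU : IsTrap A Y M x'' U) (hxU : M x ∉ U) :
    ∀ y ∈ U, ¬ A y x :=
  fun y hy h => hxU (hU.matching_mem y hy x h)

lemma outdeg_le (hU : IsTrap A Y M x'' U) (hbb : BalancedBipartite A X Y a)
    (hmatch : CompleteMatching A X Y M) (hy : y ∈ U) : outdeg A y ≤ U.card := by
  rw [outdeg_eq_ncard, ← Set.ncard_coe_finset]
  have hX : {x | A y x} ⊆ X := fun _ => hbb.symm.mem_right_of_adj (hU.subset hy)
  exact Set.ncard_le_ncard_of_injOn M (hU.matching_mem y hy) (hmatch.2.mono hX) U.finite_toSet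

lemma indeg_le (hU : IsTrap A Y M x'' U) (hbb : BalancedBipartite A X Y a) (hx : x ∈ X)
    (h : ∀ y ∈ U, ¬ A y x) : indeg A x ≤ a - U.card := by
  classical
  rw [← hbb.2.1, ← Finset.card_sdiff_of_subset hU.subset]
  exact indeg_le_card fun w hw => Finset.mem_sdiff.2 ⟨hbb.mem_right_of_adj' hx hw, (h w · hw)⟩

lemma adj_of_matching_notMem (hU : IsTrap A Y M x'' U) (hbb : BalancedBipartite A X Y a)
    (hM : CondM A a) (hmatch : CompleteMatching A X Y M) (hx : x ∈ X) (hxU : M x ∉ U)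
    (hy : y ∈ U) : A x y := by
  by_contra hxy
  have := hM y x (fun h => hbb.notMem_right hx (h ▸ hU.subset hy))
    (hU.not_adj_of_matching_notMem hxU y hy) hxy
  have := hU.outdeg_le hbb hmatch hy
  have := hU.indeg_le hbb hx (hU.not_adj_of_matching_notMem hxU)
  have := hbb.indeg_le y
  have := hbb.outdeg_le x
  have := hU.card_le hbb
  unfold deg at *
  omega

lemma card_lt (hU : IsTrap A Y M x'' U) (hbb : BalancedBipartite A X Y a) (hM : CondM A a)
    (ha : 2 ≤ a) (hx'' : x'' ∈ X) : U.card < a := by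
  have := hbb.indeg_pos hM ha hx''
  have := hU.indeg_le hbb hx'' hU.not_adj
  omega

lemma add_one_le_two_mul_card (hU : IsTrap A Y M x'' U) (hbb : BalancedBipartite A X Y a)
    (hM : CondM A a) (hmatch : CompleteMatching A X Y M) (hU2 : 2 ≤ U.card) :
    a + 1 ≤ 2 * U.card := by
  obtain ⟨y₁, hy₁, y₂, hy₂, hne⟩ := Finset.one_lt_card.1 hU2
  have := hbb.symm.add_deg_ge hM (hU.subset hy₁) (hU.subset hy₂) hne
  have := hU.outdeg_le hbb hmatch hy₁
  have := hU.outdeg_le hbb hmatch hy₂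
  have := hbb.indeg_le y₁
  have := hbb.indeg_le y₂
  unfold deg at *
  omega

lemma two_mul_card_lt (hU : IsTrap A Y M x'' U) (hbb : BalancedBipartite A X Y a)
    (hM : CondM A a) (hmatch : CompleteMatching A X Y M) (h : U.card + 2 ≤ a) :
    2 * U.card < a := by
  classical
  have hcard : 1 < (Y \ U).card := by
    rw [Finset.card_sdiff_of_subset hU.subset, hbb.2.1]
    omega
  obtain ⟨y₁, hy₁, y₂, hy₂, hne⟩ := Finset.one_lt_card.1 hcard
  rw [Finset.mem_sdiff] at hy₁ hy₂
  obtain ⟨x₁, hx₁, rfl⟩ := hmatch.exists_eq hbb hy₁.1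
  obtain ⟨x₂, hx₂, rfl⟩ := hmatch.exists_eq hbb hy₂.1
  have := hbb.add_deg_ge hM hx₁ hx₂ (fun h => hne (h ▸ rfl))
  have := hU.indeg_le hbb hx₁ (hU.not_adj_of_matching_notMem hy₁.2)
  have := hU.indeg_le hbb hx₂ (hU.not_adj_of_matching_notMem hy₂.2)
  have := hbb.outdeg_le x₁
  have := hbb.outdeg_le x₂
  unfold deg at *
  omega

lemma card_ne_one (hU : IsTrap A Y M x'' U) (hbb : BalancedBipartite A X Y a) (hM : CondM A a)
    (hmatch : CompleteMatching A X Y M) (ha : 2 ≤ a) (hnoham : ¬ HasCycleOfLength A (2 * a)) :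
    U.card ≠ 1 := by
  intro h1
  obtain ⟨y, rfl⟩ := Finset.card_eq_one.1 h1
  have hyU : y ∈ ({y} : Finset V) := Finset.mem_singleton_self y
  have hy : y ∈ Y := hU.subset hyU
  obtain ⟨x, hx, rfl⟩ := hmatch.exists_eq hbb hy
  have hdeg : deg A (M x) ≤ a + 1 := by
    have hout := hU.outdeg_le hbb hmatch hyU
    rw [Finset.card_singleton] at hout
    have := hbb.indeg_le (M x)
    unfold deg
    omega
  have hfull : ∀ y ∈ Y, y ≠ M x → ∀ x' ∈ X, A y x' ∧ A x' y := fun y hy' hne =>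
    hbb.symm.forall_adj_of_two_mul_le_deg hy'
      (by have := hbb.symm.add_deg_ge hM hy hy' hne.symm; omega)
  have hyx : A (M x) x := by
    obtain ⟨y, hy', hne⟩ := hbb.symm.exists_ne ha (M x)
    have := hbb.symm.add_deg_ge hM hy hy' hne.symm
    have := hbb.deg_le y
    have := hbb.indeg_le (M x)
    obtain ⟨w, hw⟩ := exists_adj_of_outdeg_pos (A := A) (v := M x) (by unfold deg at *; omega)
    have hw' : M w = M x := Finset.mem_singleton.1 (hU.matching_mem _ hyU w hw)
    obtain rfl := hmatch.2 (hbb.symm.mem_right_of_adj hy hw) hx hw'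
    exact hw
  refine hnoham (hbb.hasCycleOfLength_two_mul ha hy hx hyx (fun y hy hne => (hfull y hy hne x hx).2)
    (fun x' hx' hne => hU.adj_of_matching_notMem hbb hM hmatch hx' ?_ hyU)
    fun y hy hne x' hx' _ => hfull y hy hne x' hx')
  exact fun h => hne (hmatch.2 hx' hx (Finset.mem_singleton.1 h))

lemma card_add_one_ne (hU : IsTrap A Y M x'' U) (hbb : BalancedBipartite A X Y a)
    (hM : CondM A a) (hmatch : CompleteMatching A X Y M) (ha : 2 ≤ a)
    (hnoham : ¬ HasCycleOfLength A (2 * a)) (hx'' : x'' ∈ X) : U.card + 1 ≠ a := by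
  classical
  intro h
  obtain ⟨z, hz⟩ := Finset.card_eq_one.1 (by
    rw [Finset.card_sdiff_of_subset hU.subset, hbb.2.1]; omega : (Y \ U).card = 1)
  have hzY : z ∈ Y \ U := hz ▸ Finset.mem_singleton_self z
  have hmem : ∀ y ∈ Y, y ≠ z → y ∈ U := fun y hy hne => by
    by_contra hyU
    exact hne (Finset.mem_singleton.1 (hz ▸ Finset.mem_sdiff.2 ⟨hy, hyU⟩))
  rw [Finset.mem_sdiff] at hzY
  obtain ⟨c, hc, rfl⟩ := hmatch.exists_eq hbb hzY.1
  have hdeg : deg A c ≤ a + 1 := by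
    have := hU.indeg_le hbb hc (hU.not_adj_of_matching_notMem hzY.2)
    have := hbb.outdeg_le c
    unfold deg
    omega
  obtain rfl : c = x'' := by
    by_contra hne
    have := hbb.add_deg_ge hM hc hx'' hne
    have := hU.indeg_le hbb hx'' hU.not_adj
    have := hbb.outdeg_le x''
    unfold deg at *
    omega
  have hfull : ∀ x ∈ X, x ≠ c → ∀ y ∈ Y, A x y ∧ A y x := fun x hx hne =>
    hbb.forall_adj_of_two_mul_le_deg hx (by have := hbb.add_deg_ge hM hc hx hne.symm; omega)
  have hzc : A (M c) c := by
    obtain ⟨w, hw⟩ := exists_adj_of_indeg_pos (hbb.indeg_pos hM ha hc)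
    obtain rfl : w = M c := by
      by_contra hne
      exact hU.not_adj w (hmem w (hbb.mem_right_of_adj' hc hw) hne) hw
    exact hw
  exact hnoham (hbb.hasCycleOfLength_two_mul ha hzY.1 hc hzc
    (fun y hy hne => hU.adj_of_matching_notMem hbb hM hmatch hc hzY.2 (hmem y hy hne))
    (fun x hx hne => (hfull x hx hne (M c) hzY.1).1)
    fun y hy _ x hx hne => (hfull x hx hne y hy).symm)

theorem eq_empty (hU : IsTrap A Y M x'' U) (hbb : BalancedBipartite A X Y a) (hM : CondM A a)
    (hmatch : CompleteMatching A X Y M) (ha : 2 ≤ a) (hnoham : ¬ HasCycleOfLength A (2 * a))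
    (hx'' : x'' ∈ X) : U = ∅ := by
  by_contra hne
  have := Finset.card_pos.2 (Finset.nonempty_iff_ne_empty.2 hne)
  have := hU.card_lt hbb hM ha hx''
  have := hU.card_ne_one hbb hM hmatch ha hnoham
  have := hU.card_add_one_ne hbb hM hmatch ha hnoham hx''
  have := hU.add_one_le_two_mul_card hbb hM hmatch (by omega)
  have := hU.two_mul_card_lt hbb hM hmatch (by omega)
  omega

end IsTrap

theorem exists_compatPathFromTo {A : V → V → Prop} {X Y : Finset V} {a : ℕ} {M : V → V}
    (hbb : BalancedBipartite A X Y a) (hM : CondM A a) (hmatch : CompleteMatching A X Y M)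
    (ha : 2 ≤ a) (hnoham : ¬ HasCycleOfLength A (2 * a)) {y x : V} (hy : y ∈ Y) (hx : x ∈ X) :
    ∃ p, IsCompatPathFromTo A X M p y x := by
  classical
  by_contra hno
  set U := Y.filter fun y' => ¬ Relation.ReflTransGen (CompatStep A X M) y' x
  have hU : IsTrap A Y M x U := isTrap_of_forall_mem_iff hbb hmatch fun _ => Finset.mem_filter
  have hyU : y ∈ U := Finset.mem_filter.2
    ⟨hy, fun h => hno (exists_compatPathFromTo_of_reflTransGen hbb hy h)⟩
  rw [hU.eq_empty hbb hM hmatch ha hnoham hx] at hyU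
  exact Finset.notMem_empty y hyU

theorem stmt14_general {V : Type} (A : V → V → Prop)
    (X Y : Finset V) (a : ℕ) (ha : 2 ≤ a)
    (hbb : BalancedBipartite A X Y a) (hM : CondM A a)
    (M : V → V) (hmatch : CompleteMatching A X Y M)
    (hnoham : ¬ HasCycleOfLength A (2 * a))
    (y' : V) (x'' : V) (hy' : y' ∈ Y) (hx'' : x'' ∈ X)
    (S : Set V) :
    ((¬ ∃ p : List V, IsCompatPathFromTo A X M p y' x'') →
      ((a : ℝ) - 1) / 2 ≤ (Nat.card S : ℝ) ∧ (Nat.card S : ℝ) ≤ ((a : ℝ) - 2) / 2) ∧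
    ∃ p : List V, IsCompatPathFromTo A X M p y' x'' := by
  have hpath := exists_compatPathFromTo hbb hM hmatch ha hnoham hy' hx''
  exact ⟨fun hno => absurd hpath hno, hpath⟩

/-- under condition (M), with a complete matching `M` from `X` to `Y` and
no cycle of length `2a`, fix distinct `y' ∈ Y`, `x'' ∈ X`, and let `S` be the set of
vertices of `Y \ {y'}` reachable from `y'` along an `M`-compatible path of positive
length.  If there is no `M`-compatible path from `y'` to `x''`, then
`(a-1)/2 ≤ |S| ≤ (a-2)/2` (a contradiction); in particular an `M`-compatible path
from `y'` to `x''` always exists. -/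
theorem stmt14 {V : Type} [Fintype V] [DecidableEq V] (A : V → V → Prop)
    (X Y : Finset V) (a : ℕ) (ha : 2 ≤ a)
    (hbb : BalancedBipartite A X Y a) (hM : CondM A a)
    (M : V → V) (hmatch : CompleteMatching A X Y M)
    (hnoham : ¬ HasCycleOfLength A (2 * a))
    (y' : V) (x'' : V) (hy' : y' ∈ Y) (hx'' : x'' ∈ X) (hne : y' ≠ x'')
    (S : Set V)
    (hS : S = {y : V | y ∈ Y ∧ y ≠ y' ∧
      ∃ p : List V, IsCompatPathFromTo A X M p y' y ∧ 2 ≤ p.length}) :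
    ((¬ ∃ p : List V, IsCompatPathFromTo A X M p y' x'') →
      ((a : ℝ) - 1) / 2 ≤ (Nat.card S : ℝ) ∧ (Nat.card S : ℝ) ≤ ((a : ℝ) - 2) / 2) ∧
    ∃ p : List V, IsCompatPathFromTo A X M p y' x'' :=
  stmt14_general A X Y a ha hbb hM M hmatch hnoham y' x'' hy' hx'' S

end BipDigraph
end
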